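/- arXiv:2204.07261 — 3 statements merged into one kernel-verified Lean document; each statement's English description precedes it below -/
import Mathlib

section
/- Boundedness of hidden states and Jacobians (Lemma B.1): Let c_α > 0 and let the weights α satisfy L ≥ 5 c_α and ‖α‖_{F,∞} ≤ c_α L^{-1/2}. Under activation assumption (i), for every input x ∈ ℝ^d, every k = 0, 1, …, L, and every standard basis vector e_m of ℝ^d, one has ‖x‖₂ e^{-2 c_α} ≤ ‖h_k^x(α)‖₂ ≤ ‖x‖₂ e^{1.1 c_α} and ‖M_k^x(α) e_m‖₂ ≤ e^{c_α}. -/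
open Finset

noncomputable section

/-- Euclidean norm of a vector in `ℝ^d`. -/
def vnorm {d : ℕ} (v : Fin d → ℝ) : ℝ := Real.sqrt (∑ i, v i ^ 2)

/-- Frobenius norm of a `d × d` real matrix. -/
def frobNorm {d : ℕ} (A : Fin d → Fin d → ℝ) : ℝ := Real.sqrt (∑ i, ∑ j, A i j ^ 2)

/-- Matrix-vector product. -/
def mulVec' {d : ℕ} (A : Fin d → Fin d → ℝ) (v : Fin d → ℝ) : Fin d → ℝ :=
  fun i => ∑ j, A i j * v j

/-- Matrix-matrix product. -/
def matMul' {d : ℕ} (A B : Fin d → Fin d → ℝ) : Fin d → Fin d → ℝ :=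
  fun i j => ∑ l, A i l * B l j

/-- Hidden states of the residual network: `h_0 = x` and
`h_{k+1} = h_k + L^{-1/2} σ_d(α_{k+1} h_k)`, where the weight of the (1-based)
layer `k+1` is stored at the (0-based) index `k`. -/
def hiddenState {d L : ℕ} (σ : ℝ → ℝ) (α : Fin L → Fin d → Fin d → ℝ) (x : Fin d → ℝ) :
    ℕ → Fin d → ℝ
  | 0 => x
  | k + 1 =>
      if h : k < L then
        fun i => hiddenState σ α x k i + (Real.sqrt L)⁻¹ * σ (mulVec' (α ⟨k, h⟩) (hiddenState σ α x k) i)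
      else hiddenState σ α x k

/-- One factor `I_d + L^{-1/2} diag(σ'(α_{k+1} h_k)) α_{k+1}` of the layer-to-output
Jacobian (0-based index `k`). -/
def layerJac {d L : ℕ} (σ : ℝ → ℝ) (α : Fin L → Fin d → Fin d → ℝ) (x : Fin d → ℝ)
    (k : ℕ) (h : k < L) : Fin d → Fin d → ℝ :=
  fun i i' => (if i = i' then (1 : ℝ) else 0) +
    (Real.sqrt L)⁻¹ * deriv σ (mulVec' (α ⟨k, h⟩) (hiddenState σ α x k) i) * α ⟨k, h⟩ i i'

/-- Layer-to-output Jacobian `M_k^x(α) = ∂h_L/∂h_k`, where `k` is the 1-based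
paper index, `0 ≤ k ≤ L`. -/
def jacM {d L : ℕ} (σ : ℝ → ℝ) (α : Fin L → Fin d → Fin d → ℝ) (x : Fin d → ℝ) :
    ℕ → Fin d → Fin d → ℝ
  | k =>
      if h : k < L then matMul' (jacM σ α x (k + 1)) (layerJac σ α x k h)
      else fun i i' => if i = i' then 1 else 0
  termination_by k => L - k
  decreasing_by omega

/-- Mean-squared training loss `J_L`. -/
def loss {d L N : ℕ} (σ : ℝ → ℝ) (x y : Fin N → Fin d → ℝ)
    (α : Fin L → Fin d → Fin d → ℝ) : ℝ :=
  (1 / (2 * N)) * ∑ i, ∑ j, (y i j - hiddenState σ α (x i) L j) ^ 2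

/-- Partial derivative of the loss with respect to the `(m,n)` entry of the
`k`-th weight matrix. -/
def gradEntry {d L N : ℕ} (σ : ℝ → ℝ) (x y : Fin N → Fin d → ℝ)
    (α : Fin L → Fin d → Fin d → ℝ) (k : Fin L) (m n : Fin d) : ℝ :=
  fderiv ℝ (loss σ x y) α (Pi.single k (Pi.single m (Pi.single n 1)))

/-- `G_k^{x,y}(α) = (M_k^x(α))ᵀ (ŷ(x,α) − y)`; `k` is the 1-based paper index. -/
def Gvec {d L : ℕ} (σ : ℝ → ℝ) (α : Fin L → Fin d → Fin d → ℝ) (x y : Fin d → ℝ)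
    (k : ℕ) : Fin d → ℝ :=
  fun n => ∑ j, jacM σ α x k j n * (hiddenState σ α x L j - y j)

/-- Assumption (i) on the activation function: `σ ∈ C²`, `σ'(0) = 1`, and
`|σ(z)| ≤ |z|`, `|σ'(z)| ≤ 1`, `|σ''(z)| ≤ 1` for all `z`. -/
def ActAssump (σ : ℝ → ℝ) : Prop :=
  ContDiff ℝ 2 σ ∧ deriv σ 0 = 1 ∧
    ∀ z : ℝ, |σ z| ≤ |z| ∧ |deriv σ z| ≤ 1 ∧ |deriv (deriv σ) z| ≤ 1

/-!
Each residual layer moves the hidden state by at most `L^{-1/2} ‖α_k‖_F ‖h‖ ≤ (c_α / L) ‖h‖`,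
since `|σ(z)| ≤ |z|`; so `(1 - c_α/L)^k ‖x‖ ≤ ‖h_k‖ ≤ (1 + c_α/L)^k ‖x‖`. Likewise, as `|σ'| ≤ 1`,
every Jacobian factor `I + L^{-1/2} diag(σ') α_j` has operator norm at most `1 + c_α/L`.
Finally `(1 + c_α/L)^L ≤ e^{c_α}`, and `1 - t ≥ e^{-2t}` for `t = c_α/L ≤ 1/2` gives
`(1 - c_α/L)^L ≥ e^{-2c_α}`.
-/

section VectorNorm

variable {d : ℕ}

lemma vnorm_eq_norm_toLp (v : Fin d → ℝ) : vnorm v = ‖WithLp.toLp 2 v‖ := by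
  simp [vnorm, EuclideanSpace.norm_eq, sq_abs]

lemma vnorm_nonneg (v : Fin d → ℝ) : 0 ≤ vnorm v := Real.sqrt_nonneg _

lemma vnorm_add_le (u v : Fin d → ℝ) : vnorm (u + v) ≤ vnorm u + vnorm v := by
  simpa only [vnorm_eq_norm_toLp, WithLp.toLp_add] using norm_add_le _ _

lemma vnorm_sub_vnorm_le (u v : Fin d → ℝ) : vnorm u - vnorm v ≤ vnorm (u + v) := by
  simpa only [vnorm_eq_norm_toLp, WithLp.toLp_add, WithLp.toLp_neg, norm_neg, sub_neg_eq_add]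
    using norm_sub_norm_le (WithLp.toLp 2 u) (WithLp.toLp 2 (-v))

lemma vnorm_add_bounds_of_vnorm_le {u s : Fin d → ℝ} {t : ℝ} (h : vnorm s ≤ t * vnorm u) :
    (1 - t) * vnorm u ≤ vnorm (u + s) ∧ vnorm (u + s) ≤ (1 + t) * vnorm u :=
  ⟨by linarith [vnorm_sub_vnorm_le u s], by linarith [vnorm_add_le u s]⟩

lemma vnorm_le_vnorm_of_abs_le {u v : Fin d → ℝ} (h : ∀ i, |u i| ≤ |v i|) :
    vnorm u ≤ vnorm v :=
  Real.sqrt_le_sqrt (Finset.sum_le_sum fun i _ => sq_le_sq.2 (h i))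

lemma vnorm_const_mul (c : ℝ) (v : Fin d → ℝ) : vnorm (fun i => c * v i) = |c| * vnorm v := by
  simpa only [vnorm_eq_norm_toLp, WithLp.toLp_smul, norm_smul, Real.norm_eq_abs]
    using congrArg vnorm (show (fun i => c * v i) = c • v from rfl)

lemma vnorm_single_one (m : Fin d) : vnorm (Pi.single m 1) = 1 := by
  rw [vnorm_eq_norm_toLp, PiLp.toLp_single, PiLp.norm_single, norm_one]

lemma vnorm_mulVec'_le (A : Fin d → Fin d → ℝ) (v : Fin d → ℝ) :
    vnorm (mulVec' A v) ≤ frobNorm A * vnorm v := by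
  rw [vnorm, frobNorm, vnorm, ← Real.sqrt_mul (by positivity), Finset.sum_mul]
  gcongr with i
  exact Finset.sum_mul_sq_le_sq_mul_sq _ _ _

lemma mulVec'_matMul' (A B : Fin d → Fin d → ℝ) (v : Fin d → ℝ) :
    mulVec' (matMul' A B) v = mulVec' A (mulVec' B v) :=
  (Matrix.mulVec_mulVec (M := A) (N := B) v).symm

lemma mulVec'_one (v : Fin d → ℝ) :
    mulVec' (fun i i' => if i = i' then (1 : ℝ) else 0) v = v :=
  Matrix.one_mulVec v

lemma mulVec'_single_one (A : Fin d → Fin d → ℝ) (m : Fin d) :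
    mulVec' A (Pi.single m 1) = fun i => A i m := by
  funext i
  simp [mulVec', Pi.single_apply]

lemma vnorm_inv_sqrt_mul_le {n : ℕ} {c : ℝ} {A : Fin d → Fin d → ℝ} {v w : Fin d → ℝ}
    (hA : frobNorm A ≤ c * (Real.sqrt n)⁻¹) (hw : ∀ i, |w i| ≤ |mulVec' A v i|) :
    vnorm (fun i => (Real.sqrt n)⁻¹ * w i) ≤ c / n * vnorm v := by
  have hsqrt : (Real.sqrt n)⁻¹ * (Real.sqrt n)⁻¹ = (n : ℝ)⁻¹ := by
    rw [← mul_inv, Real.mul_self_sqrt n.cast_nonneg]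
  rw [vnorm_const_mul, abs_of_nonneg (by positivity)]
  calc (Real.sqrt n)⁻¹ * vnorm w
      ≤ (Real.sqrt n)⁻¹ * (frobNorm A * vnorm v) := by
        gcongr
        exact (vnorm_le_vnorm_of_abs_le hw).trans (vnorm_mulVec'_le A v)
    _ ≤ (Real.sqrt n)⁻¹ * (c * (Real.sqrt n)⁻¹ * vnorm v) := by
        gcongr
        exact vnorm_nonneg v
    _ = c / n * vnorm v := by rw [div_eq_mul_inv, ← hsqrt]; ring

end VectorNorm

lemma one_add_div_pow_le_exp {n k : ℕ} {c : ℝ} (hc : 0 ≤ c) (hk : k ≤ n) :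
    (1 + c / n) ^ k ≤ Real.exp c := by
  calc (1 + c / n) ^ k ≤ (1 + c / n) ^ n := pow_le_pow_right₀ (by simp; positivity) hk
    _ ≤ Real.exp c := by
      simpa [sub_eq_add_neg, neg_div] using
        Real.one_sub_div_pow_le_exp_neg (n := n) (t := -c) (by linarith [n.cast_nonneg (α := ℝ)])

lemma exp_neg_two_mul_le_one_sub {t : ℝ} (ht₀ : 0 ≤ t) (ht : 2 * t ≤ 1) :
    Real.exp (-(2 * t)) ≤ 1 - t := by
  -- `e^{2t} ≥ 1 + 2t`, and `(1 - t)(1 + 2t) ≥ 1` for `t ≤ 1/2`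
  have h := Real.add_one_le_exp (2 * t)
  rw [Real.exp_neg, inv_le_iff_one_le_mul₀ (Real.exp_pos _)]
  nlinarith

lemma exp_neg_two_mul_le_one_sub_div_pow {n k : ℕ} {c : ℝ} (hc : 0 ≤ c) (hcn : 2 * c ≤ n)
    (hk : k ≤ n) : Real.exp (-(2 * c)) ≤ (1 - c / n) ^ k := by
  rcases n.eq_zero_or_pos with rfl | hn
  · obtain rfl : k = 0 := Nat.le_zero.1 hk
    obtain rfl : c = 0 := by push_cast at hcn; linarith
    simp
  have hn' : (0 : ℝ) < n := by exact_mod_cast hn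
  have hcn' : c / n ≤ 1 / 2 := by rw [div_le_iff₀ hn']; linarith
  calc Real.exp (-(2 * c)) = Real.exp (-(2 * (c / n))) ^ n := by
        rw [← Real.exp_nat_mul]; congr 1; field_simp
    _ ≤ (1 - c / n) ^ n := by
        gcongr
        exact exp_neg_two_mul_le_one_sub (by positivity) (by linarith)
    _ ≤ (1 - c / n) ^ k := pow_le_pow_of_le_one (by linarith) (by linarith [div_nonneg hc hn'.le]) hk

section ResidualNetwork

variable {d L : ℕ} {σ : ℝ → ℝ} {α : Fin L → Fin d → Fin d → ℝ} {x : Fin d → ℝ} {c : ℝ}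

lemma hiddenState_succ {k : ℕ} (hk : k < L) :
    hiddenState σ α x (k + 1) = hiddenState σ α x k +
      fun i => (Real.sqrt L)⁻¹ * σ (mulVec' (α ⟨k, hk⟩) (hiddenState σ α x k) i) := by
  rw [hiddenState, dif_pos hk]
  rfl

lemma vnorm_hiddenState_succ_bounds (hσ : ∀ z, |σ z| ≤ |z|)
    (hα : ∀ k, frobNorm (α k) ≤ c * (Real.sqrt L)⁻¹) {k : ℕ} (hk : k < L) :
    (1 - c / L) * vnorm (hiddenState σ α x k) ≤ vnorm (hiddenState σ α x (k + 1)) ∧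
      vnorm (hiddenState σ α x (k + 1)) ≤ (1 + c / L) * vnorm (hiddenState σ α x k) := by
  rw [hiddenState_succ hk]
  exact vnorm_add_bounds_of_vnorm_le (vnorm_inv_sqrt_mul_le (hα _) fun i => hσ _)

lemma vnorm_hiddenState_le (hσ : ∀ z, |σ z| ≤ |z|)
    (hα : ∀ k, frobNorm (α k) ≤ c * (Real.sqrt L)⁻¹) (hc : 0 ≤ c) {k : ℕ} (hk : k ≤ L) :
    vnorm (hiddenState σ α x k) ≤ (1 + c / L) ^ k * vnorm x :=
  le_geom (u := fun k => vnorm (hiddenState σ α x k)) (by positivity) k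
    fun j hj => (vnorm_hiddenState_succ_bounds hσ hα (by omega)).2

lemma le_vnorm_hiddenState (hσ : ∀ z, |σ z| ≤ |z|)
    (hα : ∀ k, frobNorm (α k) ≤ c * (Real.sqrt L)⁻¹) (hcL : c ≤ L) {k : ℕ} (hk : k ≤ L) :
    (1 - c / L) ^ k * vnorm x ≤ vnorm (hiddenState σ α x k) :=
  geom_le (u := fun k => vnorm (hiddenState σ α x k))
    (sub_nonneg.2 (div_le_one_of_le₀ hcL L.cast_nonneg)) k
    fun j hj => (vnorm_hiddenState_succ_bounds hσ hα (by omega)).1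

lemma mulVec'_layerJac {k : ℕ} (hk : k < L) (v : Fin d → ℝ) :
    mulVec' (layerJac σ α x k hk) v = v + fun i => (Real.sqrt L)⁻¹ *
      (deriv σ (mulVec' (α ⟨k, hk⟩) (hiddenState σ α x k) i) * mulVec' (α ⟨k, hk⟩) v i) := by
  funext i
  simp only [layerJac, mulVec', Pi.add_apply, add_mul, Finset.sum_add_distrib, ite_mul, one_mul,
    zero_mul, Finset.sum_ite_eq, Finset.mem_univ, if_true, Finset.mul_sum, mul_assoc]

lemma vnorm_layerJac_mulVec'_le (hσ' : ∀ z, |deriv σ z| ≤ 1)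
    (hα : ∀ k, frobNorm (α k) ≤ c * (Real.sqrt L)⁻¹) {k : ℕ} (hk : k < L) (v : Fin d → ℝ) :
    vnorm (mulVec' (layerJac σ α x k hk) v) ≤ (1 + c / L) * vnorm v := by
  rw [mulVec'_layerJac]
  refine (vnorm_add_bounds_of_vnorm_le (vnorm_inv_sqrt_mul_le (hα ⟨k, hk⟩) fun i => ?_)).2
  rw [abs_mul]
  exact mul_le_of_le_one_left (abs_nonneg _) (hσ' _)

lemma vnorm_jacM_mulVec'_le (hσ' : ∀ z, |deriv σ z| ≤ 1)
    (hα : ∀ k, frobNorm (α k) ≤ c * (Real.sqrt L)⁻¹) (hc : 0 ≤ c) (k : ℕ) (v : Fin d → ℝ) :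
    vnorm (mulVec' (jacM σ α x k) v) ≤ (1 + c / L) ^ (L - k) * vnorm v := by
  induction hn : L - k generalizing k v with
  | zero =>
    rw [jacM, dif_neg (by omega), mulVec'_one, pow_zero, one_mul]
  | succ n ih =>
    have hk : k < L := by omega
    rw [jacM, dif_pos hk, mulVec'_matMul']
    calc vnorm (mulVec' (jacM σ α x (k + 1)) (mulVec' (layerJac σ α x k hk) v))
        ≤ (1 + c / L) ^ n * vnorm (mulVec' (layerJac σ α x k hk) v) := ih (k + 1) _ (by omega)
      _ ≤ (1 + c / L) ^ n * ((1 + c / L) * vnorm v) := by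
        gcongr
        exact vnorm_layerJac_mulVec'_le hσ' hα hk v
      _ = (1 + c / L) ^ (n + 1) * vnorm v := by ring

end ResidualNetwork

theorem statement0_general {d L : ℕ}
    {σ : ℝ → ℝ} (hσ : ActAssump σ)
    (cα : ℝ) (hcα : 0 < cα) (hLα : 5 * cα ≤ (L : ℝ))
    (α : Fin L → Fin d → Fin d → ℝ)
    (hα : ∀ k, frobNorm (α k) ≤ cα * (Real.sqrt L)⁻¹)
    (x : Fin d → ℝ) :
    ∀ k ≤ L,
      (vnorm x * Real.exp (-(2 * cα)) ≤ vnorm (hiddenState σ α x k) ∧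
        vnorm (hiddenState σ α x k) ≤ vnorm x * Real.exp (1.1 * cα)) ∧
      ∀ m : Fin d, vnorm (fun i => jacM σ α x k i m) ≤ Real.exp cα := by
  obtain ⟨-, -, hσb⟩ := hσ
  intro k hk
  have hx := vnorm_nonneg x
  refine ⟨⟨?_, ?_⟩, fun m => ?_⟩
  · calc vnorm x * Real.exp (-(2 * cα)) ≤ (1 - cα / L) ^ k * vnorm x := by
          rw [mul_comm]
          gcongr
          exact exp_neg_two_mul_le_one_sub_div_pow hcα.le (by linarith) hk
      _ ≤ vnorm (hiddenState σ α x k) :=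
          le_vnorm_hiddenState (fun z => (hσb z).1) hα (by linarith) hk
  · calc vnorm (hiddenState σ α x k) ≤ (1 + cα / L) ^ k * vnorm x :=
          vnorm_hiddenState_le (fun z => (hσb z).1) hα hcα.le hk
      _ ≤ Real.exp (1.1 * cα) * vnorm x := by
          gcongr
          exact (one_add_div_pow_le_exp hcα.le hk).trans (Real.exp_le_exp.2 (by linarith))
      _ = vnorm x * Real.exp (1.1 * cα) := mul_comm _ _
  · calc vnorm (fun i => jacM σ α x k i m)
        = vnorm (mulVec' (jacM σ α x k) (Pi.single m 1)) := by rw [mulVec'_single_one]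
      _ ≤ (1 + cα / L) ^ (L - k) * vnorm (Pi.single m (1 : ℝ)) :=
          vnorm_jacM_mulVec'_le (fun z => (hσb z).2.1) hα hcα.le k _
      _ ≤ Real.exp cα := by
          rw [vnorm_single_one, mul_one]
          exact one_add_div_pow_le_exp hcα.le (Nat.sub_le L k)

/-- **Boundedness of hidden states and Jacobians (Lemma B.1).** -/
theorem statement0 {d L : ℕ} (hd : 1 ≤ d) (hL : 1 ≤ L)
    {σ : ℝ → ℝ} (hσ : ActAssump σ)
    (cα : ℝ) (hcα : 0 < cα) (hLα : 5 * cα ≤ (L : ℝ))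
    (α : Fin L → Fin d → Fin d → ℝ)
    (hα : ∀ k, frobNorm (α k) ≤ cα * (Real.sqrt L)⁻¹)
    (x : Fin d → ℝ) :
    ∀ k ≤ L,
      (vnorm x * Real.exp (-(2 * cα)) ≤ vnorm (hiddenState σ α x k) ∧
        vnorm (hiddenState σ α x k) ≤ vnorm x * Real.exp (1.1 * cα)) ∧
      ∀ m : Fin d, vnorm (fun i => jacM σ α x k i m) ≤ Real.exp cα :=
  statement0_general hσ cα hcα hLα α hα x
end
end

section
/- Finite 2-variation of the scaling limit of trained weights (Proposition 3.6, standalone form): Let d ∈ ℕ, and for each L ∈ ℕ let A^{(L)} = (A^{(L)}_1, …, A^{(L)}_L) be a family of real d×d matrices. Suppose there exists c > 0 such that: (a) L ‖A^{(L)}_{k+1} − A^{(L)}_k‖_F ≤ c for all L and all k = 1, …, L−1 (this uniform bound holds for the trained weights under the hypotheses of Theorem 3.5); and (b) there exists a function Ā* : [0,1] → ℝ^{d×d} such that sup_{s∈[0,1]} ‖L^{1/2} A^{(L)}_{⌊Ls⌋} − Ā*_s‖_F ≤ c L^{-1/2} for all sufficiently large L. Then Ā* has finite 2-variation: sup over all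 finite partitions 0 = s_0 < s_1 < … < s_K = 1 of Σ_{i=0}^{K−1} ‖Ā*_{s_{i+1}} − Ā*_{s_i}‖_F² is finite. -/
/-! At depth `L ≥ L₀` the rescaled weights `√L A_k` move by at most `c/√L` per layer and stay
within `c/√L` of `Ā*`, so comparing `Ā*_s` and `Ā*_t` through the layers `⌊Ls⌋, …, ⌊Lt⌋` gives
`‖Ā*_t - Ā*_s‖ ≤ (2L(t - s) + 6) c/√L`. Taking `L ≈ 1/(t - s)` shows that `Ā*` is `1/2`-Hölder
on `[0, 1]`, and the squared increments of a `1/2`-Hölder function along a partition add up to at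
most the square of its constant. -/

open Finset

noncomputable section

section FixedScale

variable {X : Type*} [PseudoMetricSpace X] {x : ℕ → X} {g : ℝ → X} {L : ℕ} {ε : ℝ}

lemma dist_le_of_one_le_floor
    (hstep : ∀ k, 1 ≤ k → k + 1 ≤ L → dist (x (k + 1)) (x k) ≤ ε)
    (happ : ∀ s ∈ Set.Icc (0 : ℝ) 1, dist (x ⌊L * s⌋₊) (g s) ≤ ε)
    {s t : ℝ} (hs : 0 ≤ s) (hst : s ≤ t) (ht : t ≤ 1) (hfloor : 1 ≤ ⌊L * s⌋₊) :
    dist (g s) (g t) ≤ (L * (t - s) + 3) * ε := by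
  have hε : 0 ≤ ε := dist_nonneg.trans (happ 0 ⟨le_rfl, zero_le_one⟩)
  set a := ⌊L * s⌋₊
  set b := ⌊L * t⌋₊
  have hab : a ≤ b := Nat.floor_mono (by gcongr)
  have hbL : b ≤ L := Nat.floor_le_of_le (mul_le_of_le_one_right L.cast_nonneg ht)
  have hchain : dist (x a) (x b) ≤ ∑ _k ∈ Ico a b, ε :=
    dist_le_Ico_sum_of_dist_le hab fun hak hkb =>
      (dist_comm _ _).trans_le (hstep _ (hfloor.trans hak) (by omega))
  have hgap : ((b - a : ℕ) : ℝ) ≤ L * (t - s) + 1 := by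
    have := Nat.floor_le (mul_nonneg L.cast_nonneg (hs.trans hst))
    have := Nat.lt_floor_add_one ((L : ℝ) * s)
    rw [Nat.cast_sub hab]
    linarith
  rw [sum_const, Nat.card_Ico, nsmul_eq_mul] at hchain
  calc dist (g s) (g t) ≤ dist (g s) (x a) + dist (x a) (x b) + dist (x b) (g t) :=
        dist_triangle4 _ _ _ _
    _ ≤ ε + (L * (t - s) + 1) * ε + ε := by
        gcongr
        · exact (dist_comm _ _).trans_le (happ s ⟨hs, hst.trans ht⟩)
        · exact hchain.trans (by gcongr)
        · exact happ t ⟨hs.trans hst, ht⟩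
    _ = (L * (t - s) + 3) * ε := by ring

lemma dist_le_of_floor_eq_zero
    (happ : ∀ s ∈ Set.Icc (0 : ℝ) 1, dist (x ⌊L * s⌋₊) (g s) ≤ ε)
    {s t : ℝ} (hs : s ∈ Set.Icc (0 : ℝ) 1) (ht : t ∈ Set.Icc (0 : ℝ) 1)
    (hs0 : ⌊L * s⌋₊ = 0) (ht0 : ⌊L * t⌋₊ = 0) :
    dist (g s) (g t) ≤ 2 * ε := by
  have h₁ := happ s hs
  have h₂ := happ t ht
  rw [hs0] at h₁
  rw [ht0] at h₂
  linarith [dist_triangle_left (g s) (g t) (x 0)]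

end FixedScale

lemma exists_nat_one_le_mul_le (N : ℕ) {δ : ℝ} (hδ : 0 < δ) (hδ1 : δ ≤ 1) :
    ∃ L : ℕ, N ≤ L ∧ 1 ≤ L * δ ∧ L * δ ≤ N + 2 := by
  have hceil : (⌈δ⁻¹⌉₊ : ℝ) < δ⁻¹ + 1 := Nat.ceil_lt_add_one (inv_nonneg.mpr hδ.le)
  refine ⟨max N ⌈δ⁻¹⌉₊, le_max_left _ _, ?_, ?_⟩
  · calc (1 : ℝ) = δ⁻¹ * δ := (inv_mul_cancel₀ hδ.ne').symm
      _ ≤ ⌈δ⁻¹⌉₊ * δ := by gcongr; exact Nat.le_ceil _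
      _ ≤ (max N ⌈δ⁻¹⌉₊ : ℕ) * δ := by gcongr; exact le_max_right _ _
  · rw [Nat.cast_max, max_mul_of_nonneg _ _ hδ.le]
    refine max_le (by nlinarith) ?_
    calc (⌈δ⁻¹⌉₊ : ℝ) * δ ≤ (δ⁻¹ + 1) * δ := by gcongr
      _ = 1 + δ := by field_simp
      _ ≤ N + 2 := by linarith [N.cast_nonneg (α := ℝ)]

section Holder

variable {X : Type*} [PseudoMetricSpace X] {f : ℕ → ℕ → X} {g : ℝ → X} {c : ℝ} {L₀ : ℕ}

lemma dist_le_at_scale (hc : 0 ≤ c)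
    (hstep : ∀ L k : ℕ, 1 ≤ k → k + 1 ≤ L → dist (f L (k + 1)) (f L k) ≤ c / √L)
    (happ : ∀ L : ℕ, L₀ ≤ L → ∀ s ∈ Set.Icc (0 : ℝ) 1, dist (f L ⌊L * s⌋₊) (g s) ≤ c / √L)
    {L : ℕ} (hL₀ : L₀ ≤ L) (hL : 1 ≤ L) {s t : ℝ} (hs : 0 ≤ s) (hst : s ≤ t) (ht : t ≤ 1) :
    dist (g s) (g t) ≤ (2 * L * (t - s) + 6) * (c / √L) := by
  have hε : 0 ≤ c / √L := by positivity
  have hδ : 0 ≤ L * (t - s) := mul_nonneg L.cast_nonneg (by linarith)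
  rcases Nat.eq_zero_or_pos ⌊L * s⌋₊ with hs0 | hs1
  swap
  · calc dist (g s) (g t) ≤ (L * (t - s) + 3) * (c / √L) :=
          dist_le_of_one_le_floor (hstep L) (happ L hL₀) hs hst ht hs1
      _ ≤ (2 * L * (t - s) + 6) * (c / √L) := mul_le_mul_of_nonneg_right (by linarith) hε
  rcases Nat.eq_zero_or_pos ⌊L * t⌋₊ with ht0 | ht1
  · calc dist (g s) (g t) ≤ 2 * (c / √L) :=
          dist_le_of_floor_eq_zero (happ L hL₀) ⟨hs, hst.trans ht⟩ ⟨hs.trans hst, ht⟩ hs0 ht0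
      _ ≤ (2 * L * (t - s) + 6) * (c / √L) := mul_le_mul_of_nonneg_right (by linarith) hε
  -- `hstep` does not link the indices `0` and `1`; the point `u = 1/(L+1)` bridges them, having
  -- index `0` at scale `L` and index `1` at scale `L + 1`.
  set u : ℝ := 1 / (L + 1)
  have hL1 : (0 : ℝ) < L + 1 := by positivity
  have hLu : ((L + 1 : ℕ) : ℝ) * u = 1 := by push_cast; exact mul_one_div_cancel hL1.ne'
  have hLs : (L : ℝ) * s < 1 := by simpa using hs0
  have hLt : 1 ≤ (L : ℝ) * t := (Nat.one_le_floor_iff _).mp ht1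
  have hu0 : 0 ≤ u := by positivity
  have hut : u ≤ t := by
    rw [div_le_iff₀ hL1]; nlinarith
  have hgsu : dist (g s) (g u) ≤ 2 * (c / √L) := by
    refine dist_le_of_floor_eq_zero (happ L hL₀) ⟨hs, hst.trans ht⟩ ⟨hu0, hut.trans ht⟩ hs0 ?_
    rw [Nat.floor_eq_zero, mul_one_div, div_lt_one hL1]
    linarith
  have hgut : dist (g u) (g t) ≤ ((L + 1 : ℕ) * (t - u) + 3) * (c / √(L + 1 : ℕ)) :=
    dist_le_of_one_le_floor (hstep (L + 1)) (happ (L + 1) (by omega)) hu0 hut ht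
      (by rw [hLu, Nat.floor_one])
  have hgap : ((L + 1 : ℕ) : ℝ) * (t - u) + 3 ≤ 2 * L * (t - s) + 4 := by
    have : (1 : ℝ) ≤ L := by exact_mod_cast hL
    push_cast at hLu ⊢
    nlinarith
  have hscale : c / √(L + 1 : ℕ) ≤ c / √L := by
    gcongr
    simp
  calc dist (g s) (g t) ≤ dist (g s) (g u) + dist (g u) (g t) := dist_triangle _ _ _
    _ ≤ 2 * (c / √L) + (2 * L * (t - s) + 4) * (c / √L) := by
        gcongr
        refine hgut.trans (mul_le_mul hgap hscale (by positivity) (by linarith))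
    _ = (2 * L * (t - s) + 6) * (c / √L) := by ring

lemma dist_le_mul_sqrt_of_approx (hc : 0 ≤ c)
    (hstep : ∀ L k : ℕ, 1 ≤ k → k + 1 ≤ L → dist (f L (k + 1)) (f L k) ≤ c / √L)
    (happ : ∀ L : ℕ, L₀ ≤ L → ∀ s ∈ Set.Icc (0 : ℝ) 1, dist (f L ⌊L * s⌋₊) (g s) ≤ c / √L)
    {s t : ℝ} (hs : 0 ≤ s) (hst : s ≤ t) (ht : t ≤ 1) :
    dist (g s) (g t) ≤ (2 * L₀ + 10) * c * √(t - s) := by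
  rcases hst.eq_or_lt with rfl | hlt
  · simp
  obtain ⟨L, hL₀, hLδ, hLδ'⟩ := exists_nat_one_le_mul_le L₀ (sub_pos.mpr hlt) (by linarith)
  have hL : 1 ≤ L := by
    have : (1 : ℝ) ≤ L := hLδ.trans (mul_le_of_le_one_right L.cast_nonneg (by linarith))
    exact_mod_cast this
  -- choosing `L ≈ 1/(t - s)` balances the two terms of `dist_le_at_scale`
  have hscale : c / √L ≤ c * √(t - s) := by
    rw [div_eq_mul_inv, ← Real.sqrt_inv]
    gcongr
    rw [inv_le_iff_one_le_mul₀ (by exact_mod_cast hL)]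
    linarith
  calc dist (g s) (g t) ≤ (2 * (L * (t - s)) + 6) * (c / √L) := by
        simpa only [mul_assoc] using dist_le_at_scale hc hstep happ hL₀ hL hs hst ht
    _ ≤ (2 * (L₀ + 2) + 6) * (c * √(t - s)) := by gcongr
    _ = (2 * L₀ + 10) * c * √(t - s) := by ring

lemma sum_sq_dist_le_of_dist_le_mul_sqrt {a b C : ℝ}
    (hg : ∀ s t, a ≤ s → s ≤ t → t ≤ b → dist (g s) (g t) ≤ C * √(t - s))
    {K : ℕ} {s : ℕ → ℝ} (h0 : s 0 = a) (hK : s K = b) (hmono : ∀ i < K, s i ≤ s (i + 1)) :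
    ∑ i ∈ range K, dist (g (s i)) (g (s (i + 1))) ^ 2 ≤ C ^ 2 * (b - a) := by
  have hs : MonotoneOn s (Set.Iic K) :=
    monotoneOn_of_le_succ Set.ordConnected_Iic fun i _ _ hi => by
      rw [Order.succ_eq_add_one] at hi ⊢
      exact hmono i (Nat.lt_of_succ_le hi)
  calc ∑ i ∈ range K, dist (g (s i)) (g (s (i + 1))) ^ 2
      ≤ ∑ i ∈ range K, C ^ 2 * (s (i + 1) - s i) := by
        refine sum_le_sum fun i hi => ?_
        have hi : i + 1 ≤ K := mem_range.mp hi
        have hsi : a ≤ s i :=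
          h0 ▸ hs (Set.mem_Iic.mpr (Nat.zero_le K)) (Set.mem_Iic.mpr (by omega)) (Nat.zero_le i)
        have hsi' : s (i + 1) ≤ b := hK ▸ hs (Set.mem_Iic.mpr hi) (Set.mem_Iic.mpr le_rfl) hi
        have hδ : 0 ≤ s (i + 1) - s i := sub_nonneg.mpr (hmono i hi)
        calc dist (g (s i)) (g (s (i + 1))) ^ 2 ≤ (C * √(s (i + 1) - s i)) ^ 2 :=
              pow_le_pow_left₀ dist_nonneg (hg _ _ hsi (hmono i hi) hsi') 2
          _ = C ^ 2 * (s (i + 1) - s i) := by rw [mul_pow, Real.sq_sqrt hδ]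
    _ = C ^ 2 * (b - a) := by rw [← mul_sum, sum_range_sub, hK, h0]

end Holder

section Frobenius

variable {d : ℕ}

def frobVec (A : Fin d → Fin d → ℝ) : EuclideanSpace ℝ (Fin d × Fin d) :=
  WithLp.toLp 2 (Function.uncurry A)

lemma frobNorm_sub_eq_dist (A B : Fin d → Fin d → ℝ) :
    frobNorm (fun i j => A i j - B i j) = dist (frobVec A) (frobVec B) := by
  rw [dist_eq_norm, EuclideanSpace.norm_eq, frobNorm, Fintype.sum_prod_type]
  simp [frobVec, sq_abs]

lemma dist_frobVec_const_mul (r : ℝ) (A B : Fin d → Fin d → ℝ) :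
    dist (frobVec fun i j => r * A i j) (frobVec fun i j => r * B i j)
      = |r| * frobNorm (fun i j => A i j - B i j) := by
  rw [frobNorm_sub_eq_dist, ← Real.norm_eq_abs, ← dist_smul₀]
  rfl

end Frobenius

theorem statement12_general {d : ℕ}
    (A : (L : ℕ) → ℕ → Fin d → Fin d → ℝ) (c : ℝ) (hc : 0 < c)
    (ha : ∀ L k : ℕ, 1 ≤ k → k + 1 ≤ L →
      (L : ℝ) * frobNorm (fun i j => A L (k + 1) i j - A L k i j) ≤ c)
    (Abar : ℝ → Fin d → Fin d → ℝ)
    (hb : ∃ L₀ : ℕ, ∀ L : ℕ, L₀ ≤ L → ∀ s ∈ Set.Icc (0 : ℝ) 1,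
      frobNorm (fun i j => Real.sqrt L * A L (Nat.floor ((L : ℝ) * s)) i j - Abar s i j)
        ≤ c * (Real.sqrt L)⁻¹) :
    ∃ C : ℝ, ∀ (K : ℕ) (s : ℕ → ℝ), s 0 = 0 → s K = 1 → (∀ i < K, s i < s (i + 1)) →
      ∑ i ∈ Finset.range K,
          frobNorm (fun a b => Abar (s (i + 1)) a b - Abar (s i) a b) ^ 2 ≤ C := by
  obtain ⟨L₀, hb⟩ := hb
  let f (L k : ℕ) := frobVec fun i j => √L * A L k i j
  have hstep (L k : ℕ) (hk : 1 ≤ k) (hkL : k + 1 ≤ L) : dist (f L (k + 1)) (f L k) ≤ c / √L := by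
    calc dist (f L (k + 1)) (f L k)
        = L * frobNorm (fun i j => A L (k + 1) i j - A L k i j) / √L := by
          rw [dist_frobVec_const_mul, abs_of_nonneg (Real.sqrt_nonneg _), mul_div_right_comm,
            Real.div_sqrt]
      _ ≤ c / √L := by gcongr; exact ha L k hk hkL
  have happ (L : ℕ) (hL : L₀ ≤ L) (s : ℝ) (hs : s ∈ Set.Icc (0 : ℝ) 1) :
      dist (f L ⌊L * s⌋₊) (frobVec (Abar s)) ≤ c / √L := by
    simpa only [frobNorm_sub_eq_dist, div_eq_mul_inv] using hb L hL s hs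
  refine ⟨((2 * L₀ + 10) * c) ^ 2, fun K s h0 hK hmono => ?_⟩
  have hvar := sum_sq_dist_le_of_dist_le_mul_sqrt
    (fun u v hu huv hv => dist_le_mul_sqrt_of_approx hc.le hstep happ hu huv hv)
    h0 hK fun i hi => (hmono i hi).le
  simpa [frobNorm_sub_eq_dist, dist_comm] using hvar

/-- **Finite 2-variation of the scaling limit of trained weights (Proposition 3.6,
standalone form).** `A L k` is the `k`-th weight matrix (indexed by `k = 0,…,L`) of the
depth-`L` network; (a) is the uniform layer-increment bound and (b) the uniform
`O(L^{-1/2})` convergence of the rescaled weights to `Ā*`. The conclusion is that `Ā*`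
has finite 2-variation over partitions of `[0,1]`. -/
theorem statement12 {d : ℕ} (hd : 1 ≤ d)
    (A : (L : ℕ) → ℕ → Fin d → Fin d → ℝ) (c : ℝ) (hc : 0 < c)
    (ha : ∀ L k : ℕ, 1 ≤ k → k + 1 ≤ L →
      (L : ℝ) * frobNorm (fun i j => A L (k + 1) i j - A L k i j) ≤ c)
    (Abar : ℝ → Fin d → Fin d → ℝ)
    (hb : ∃ L₀ : ℕ, ∀ L : ℕ, L₀ ≤ L → ∀ s ∈ Set.Icc (0 : ℝ) 1,
      frobNorm (fun i j => Real.sqrt L * A L (Nat.floor ((L : ℝ) * s)) i j - Abar s i j)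
        ≤ c * (Real.sqrt L)⁻¹) :
    ∃ C : ℝ, ∀ (K : ℕ) (s : ℕ → ℝ), s 0 = 0 → s K = 1 → (∀ i < K, s i < s (i + 1)) →
      ∑ i ∈ Finset.range K,
          frobNorm (fun a b => Abar (s (i + 1)) a b - Abar (s i) a b) ^ 2 ≤ C :=
  statement12_general A c hc ha Abar hb
end
end

section
/- Square-root discrete Grönwall inequality (Lemma G.4(ii)): Let (u_n), (w_n) be sequences of positive reals and (g_n) a sequence of reals with g_0 > 0 and 0 < g_{n+1} ≤ u_n g_n + w_n g_n^{1/2} for all n ≥ 0. Then for every n ≥ 0: g_n^{1/2} ≤ (∏_{n'=0}^{n−1} u_{n'}^{1/2}) g_0^{1/2} + (1/2) Σ_{n'=0}^{n−1} (∏_{n''=n'+1}^{n−1} u_{n''}^{1/2}) w_{n'} / u_{n'}^{1/2}. -/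
/-!
Completing the square gives `u g + w √g ≤ (√u √g + w / (2 √u))²`, so `√g` obeys the linear
recurrence `√g (n+1) ≤ √u n * √g n + w n / (2 √u n)`, which the discrete Grönwall inequality
in product form unrolls into the claimed bound.
-/

open Finset

theorem Real.sqrt_mul_add_mul_sqrt_le {u w : ℝ} (hu : 0 < u) (hw : 0 ≤ w) (x : ℝ) :
    √(u * x + w * √x) ≤ √u * √x + 1 / 2 * (w / √u) := by
  have hsu : 0 < √u := Real.sqrt_pos.mpr hu
  have hx : x ≤ √x ^ 2 := Real.sq_sqrt' (x := x) ▸ le_max_left x 0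
  refine Real.sqrt_le_iff.mpr ⟨by positivity, ?_⟩
  calc u * x + w * √x ≤ u * √x ^ 2 + w * √x + (1 / 2 * (w / √u)) ^ 2 := by
        nlinarith [sq_nonneg (1 / 2 * (w / √u))]
    _ = (√u * √x + 1 / 2 * (w / √u)) ^ 2 := by
        field_simp; rw [Real.sq_sqrt hu.le]; ring

theorem statement17_general (u w g : ℕ → ℝ) (hu : ∀ n, 0 < u n) (hw : ∀ n, 0 < w n)
    (hg : ∀ n, 0 < g (n + 1) ∧ g (n + 1) ≤ u n * g n + w n * Real.sqrt (g n)) (n : ℕ) :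
    Real.sqrt (g n)
      ≤ (∏ i ∈ Finset.range n, Real.sqrt (u i)) * Real.sqrt (g 0)
        + (1 / 2) * ∑ i ∈ Finset.range n,
            (∏ j ∈ Finset.Ico (i + 1) n, Real.sqrt (u j)) * (w i / Real.sqrt (u i)) := by
  have hrec : ∀ n ≥ 0, √(g (n + 1)) ≤ √(u n) * √(g n) + 1 / 2 * (w n / √(u n)) := fun n _ ↦
    (Real.sqrt_le_sqrt (hg n).2).trans (Real.sqrt_mul_add_mul_sqrt_le (hu n) (hw n).le _)
  have hgronwall := discrete_gronwall_prod_general (u := fun n ↦ √(g n)) hrec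
    (fun n _ ↦ Real.sqrt_nonneg (u n)) (Nat.zero_le n)
  rw [← range_eq_Ico] at hgronwall
  refine hgronwall.trans_eq ?_
  rw [mul_comm, mul_sum]
  exact congrArg _ (sum_congr rfl fun i _ ↦ by ring)

/-- **Square-root discrete Grönwall inequality (Lemma G.4(ii)).** -/
theorem statement17 (u w g : ℕ → ℝ) (hu : ∀ n, 0 < u n) (hw : ∀ n, 0 < w n)
    (hg0 : 0 < g 0)
    (hg : ∀ n, 0 < g (n + 1) ∧ g (n + 1) ≤ u n * g n + w n * Real.sqrt (g n)) (n : ℕ) :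
    Real.sqrt (g n)
      ≤ (∏ i ∈ Finset.range n, Real.sqrt (u i)) * Real.sqrt (g 0)
        + (1 / 2) * ∑ i ∈ Finset.range n,
            (∏ j ∈ Finset.Ico (i + 1) n, Real.sqrt (u j)) * (w i / Real.sqrt (u i)) :=
  statement17_general u w g hu hw hg n
end
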